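/- Let D := Σ_{n≥1} d_n·z^n and B := Σ_{n≥0} b_n·z^n in ℤ[[z]], where d_n counts weighted Motzkin paths of length n with total increment −1 and nonnegative proper partial heights, and b_n counts unconstrained weighted Motzkin paths of length n with total increment 0. Then (1 − D²)·B = 1 + 4D + D² in ℤ[[z]]. -/

import Mathlib

/-!
Decompose a path by its first step and, after an up step, at its first passage below the
starting height. A `D`-path is a down step, a horizontal step followed by a `D`-path, or an up
step followed by two `D`-paths. A `B`-path is empty, a horizontal step followed by a `B`-path,
or an up (down) step followed by a path of increment `-1` (`+1`), which splits into a `D`-path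
(the mirror image of a `D`-path) and a `B`-path. The `D`-paths form a prefix-free code, so all
these splittings are unique and give `D = z (1 + 4D + D²)` and `B = 1 + z (4B + 2DB)`;
eliminating `z` yields the identity.
-/

/-- A weighted Motzkin step: an up step, a down step, or one of four distinguishable
horizontal steps. -/
inductive WStep : Type
  | up : WStep
  | down : WStep
  | h1 : WStep
  | h2 : WStep
  | h3 : WStep
  | h4 : WStep

/-- The height increment of a weighted Motzkin step. -/
def WStep.inc : WStep → ℤ
  | .up => 1
  | .down => -1
  | _ => 0

/-- The total height increment of a weighted Motzkin path. -/
def hsum (p : List WStep) : ℤ := (p.map WStep.inc).sum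

/-- `dnum n` : number of weighted Motzkin paths of length `n` with total increment `-1`
whose proper partial heights (after each step except the last) are all nonnegative. -/
noncomputable def dnum (n : ℕ) : ℕ :=
  Nat.card {p : List WStep // p.length = n ∧ hsum p = -1 ∧
    ∀ i < n, 0 ≤ hsum (p.take i)}

/-- `bnum n` : number of unconstrained weighted Motzkin paths of length `n` with total
increment `0`. -/
noncomputable def bnum (n : ℕ) : ℕ :=
  Nat.card {p : List WStep // p.length = n ∧ hsum p = 0}

/-- The generating series `D = Σ_{n≥1} d_n z^n`. -/
noncomputable def Dser : PowerSeries ℤ := PowerSeries.mk fun n => (dnum n : ℤ)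

/-- The generating series `B = Σ_{n≥0} b_n z^n`. -/
noncomputable def Bser : PowerSeries ℤ := PowerSeries.mk fun n => (bnum n : ℤ)

open PowerSeries

section LengthGF

variable {α : Type*}

/-- `ncard` is `0` on infinite sets; over a finite alphabet every length level is finite. -/
noncomputable def lengthGF (S : Set (List α)) : PowerSeries ℤ :=
  PowerSeries.mk fun n => {l | l.length = n ∧ l ∈ S}.ncard

def PrefixFree (S : Set (List α)) : Prop :=
  ∀ a ∈ S, ∀ b ∈ S, a <+: b → a = b

theorem PrefixFree.append_inj {S : Set (List α)} (hS : PrefixFree S) {a a' b b' : List α}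
    (ha : a ∈ S) (ha' : a' ∈ S) (h : a ++ b = a' ++ b') : a = a' ∧ b = b' := by
  have hpre :=
    List.prefix_or_prefix_of_prefix (h ▸ List.prefix_append a b) (List.prefix_append a' b')
  obtain rfl : a = a' := hpre.elim (hS a ha a' ha') fun h' => (hS a' ha' a ha h').symm
  exact ⟨rfl, List.append_cancel_left h⟩

theorem disjoint_image2_cons {T T' : Set α} (h : Disjoint T T') (S S' : Set (List α)) :
    Disjoint (Set.image2 List.cons T S) (Set.image2 List.cons T' S') := by
  rw [Set.disjoint_left]
  rintro _ ⟨a, ha, l, -, rfl⟩ ⟨a', ha', l', -, heq⟩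
  rw [List.cons.injEq] at heq
  exact Set.disjoint_left.mp h ha (heq.1 ▸ ha')

theorem disjoint_nil_image2_cons (T : Set α) (S : Set (List α)) :
    Disjoint {[]} (Set.image2 List.cons T S) := by
  rw [Set.disjoint_singleton_left]
  rintro ⟨_, _, _, _, h⟩
  exact List.cons_ne_nil _ _ h

theorem lengthGF_image_map {β : Type*} {f : α → β} (hf : f.Injective) (S : Set (List α)) :
    lengthGF (List.map f '' S) = lengthGF S := by
  ext n
  have hlevel : {l | l.length = n ∧ l ∈ List.map f '' S} =
      List.map f '' {l | l.length = n ∧ l ∈ S} := by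
    ext l
    constructor
    · rintro ⟨hl, l', hl', rfl⟩
      exact ⟨l', ⟨by simpa using hl, hl'⟩, rfl⟩
    · rintro ⟨l', ⟨hl, hl'⟩, rfl⟩
      exact ⟨by simpa using hl, l', hl', rfl⟩
  simp only [lengthGF, coeff_mk, hlevel,
    Set.ncard_image_of_injective _ (List.map_injective_iff.mpr hf)]

theorem lengthGF_singleton_nil : lengthGF ({[]} : Set (List α)) = 1 := by
  ext n
  rcases n with _ | n
  · simp [lengthGF]
  · have hempty : {l : List α | l.length = n + 1 ∧ l ∈ ({[]} : Set (List α))} = ∅ :=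
      Set.eq_empty_of_forall_notMem fun l ⟨hl, hnil⟩ => by
        simp [Set.mem_singleton_iff.mp hnil] at hl
    simp only [lengthGF, coeff_mk, hempty, Set.ncard_empty, coeff_one, n.succ_ne_zero, if_false,
      Nat.cast_zero]

theorem lengthGF_image2_cons (T : Set α) (S : Set (List α)) :
    lengthGF (Set.image2 List.cons T S) = X * (Nat.card T • lengthGF S) := by
  ext n
  rcases n with _ | n
  · have hempty : {l | l.length = 0 ∧ l ∈ Set.image2 List.cons T S} = ∅ :=
      Set.eq_empty_of_forall_notMem fun l ⟨hl, _, _, _, _, hcons⟩ => by simp [← hcons] at hl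
    simp only [lengthGF, coeff_mk, hempty, Set.ncard_empty, coeff_zero_X_mul, Nat.cast_zero]
  rw [coeff_succ_X_mul, map_nsmul]
  simp only [lengthGF, coeff_mk, ← Nat.card_coe_set_eq, ← Nat.card_prod, nsmul_eq_mul,
    ← Nat.cast_mul]
  congr 1
  refine (Nat.card_eq_of_bijective
    (fun x => ⟨x.1.1 :: x.2.1, by simpa using x.2.2.1, Set.mem_image2_of_mem x.1.2 x.2.2.2⟩)
    ⟨?_, ?_⟩).symm
  · rintro ⟨⟨a, ha⟩, ⟨l, hl⟩⟩ ⟨⟨a', ha'⟩, ⟨l', hl'⟩⟩ h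
    simp only [Subtype.mk.injEq, List.cons.injEq] at h
    obtain ⟨rfl, rfl⟩ := h
    rfl
  · rintro ⟨_, hn, a, ha, l, hl, rfl⟩
    exact ⟨⟨⟨a, ha⟩, ⟨l, by simpa using hn, hl⟩⟩, rfl⟩

variable [Finite α]

theorem finite_setOf_length_eq_and (n : ℕ) (P : List α → Prop) :
    {l : List α | l.length = n ∧ P l}.Finite :=
  (List.finite_length_eq α n).subset fun _ h => h.1

instance (n : ℕ) (P : List α → Prop) : Finite {l : List α | l.length = n ∧ P l} :=
  (finite_setOf_length_eq_and n P).to_subtype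

theorem lengthGF_union {S T : Set (List α)} (h : Disjoint S T) :
    lengthGF (S ∪ T) = lengthGF S + lengthGF T := by
  ext n
  have hsplit : {l : List α | l.length = n ∧ l ∈ S ∪ T} =
      {l | l.length = n ∧ l ∈ S} ∪ {l | l.length = n ∧ l ∈ T} := by
    ext l; simp only [Set.mem_ofPred_eq, Set.mem_union, and_or_left]
  simp only [lengthGF, coeff_mk, map_add, hsplit]
  rw [Set.ncard_union_eq (h.mono (fun _ hl => hl.2) (fun _ hl => hl.2))
    (finite_setOf_length_eq_and n _) (finite_setOf_length_eq_and n _), Nat.cast_add]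

theorem lengthGF_image2_append {S : Set (List α)} (hS : PrefixFree S) (T : Set (List α)) :
    lengthGF (Set.image2 (· ++ ·) S T) = lengthGF S * lengthGF T := by
  ext n
  simp only [lengthGF, coeff_mul, coeff_mk, ← Nat.card_coe_set_eq, ← Nat.cast_mul,
    ← Nat.card_prod]
  rw [← Finset.sum_coe_sort, ← Nat.cast_sum, ← Nat.card_sigma]
  congr 1
  refine (Nat.card_eq_of_bijective
    (fun x => ⟨x.2.1.1 ++ x.2.2.1,
      by simp [x.2.1.2.1, x.2.2.2.1, Finset.HasAntidiagonal.mem_antidiagonal.mp x.1.2],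
      Set.mem_image2_of_mem x.2.1.2.2 x.2.2.2.2⟩)
    ⟨?_, ?_⟩).symm
  · rintro ⟨⟨⟨i, j⟩, _⟩, ⟨a, hai, ha⟩, ⟨b, hbj, _⟩⟩
      ⟨⟨⟨i', j'⟩, _⟩, ⟨a', hai', ha'⟩, ⟨b', hbj', _⟩⟩ h
    obtain ⟨rfl, rfl⟩ := hS.append_inj ha ha' (Subtype.mk.inj h)
    simp only at hai hai' hbj hbj'
    subst hai hai' hbj hbj'
    rfl
  · rintro ⟨_, rfl, a, ha, b, hb, rfl⟩
    exact ⟨⟨⟨(a.length, b.length), by simp⟩, ⟨a, rfl, ha⟩, ⟨b, rfl, hb⟩⟩, rfl⟩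

end LengthGF

deriving instance DecidableEq for WStep

instance : Fintype WStep :=
  ⟨{.up, .down, .h1, .h2, .h3, .h4}, fun s => by cases s <;> decide⟩

namespace WStep

theorem eq_up_or_eq_down_or_inc_eq_zero (s : WStep) : s = up ∨ s = down ∨ s.inc = 0 := by
  cases s <;> simp [inc]

def neg : WStep → WStep
  | up => down
  | down => up
  | s => s

theorem neg_involutive : Function.Involutive neg := by
  intro s; cases s <;> rfl

@[simp]
theorem inc_neg (s : WStep) : s.neg.inc = -s.inc := by
  cases s <;> rfl

def horizontal : Set WStep := {s | s.inc = 0}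

theorem card_horizontal : Nat.card horizontal = 4 := by
  change Nat.card {s : WStep // s.inc = 0} = 4
  rw [Nat.card_eq_fintype_card]
  rfl

end WStep

@[simp] theorem hsum_nil : hsum [] = 0 := rfl

@[simp] theorem hsum_cons (s : WStep) (l : List WStep) : hsum (s :: l) = s.inc + hsum l := by
  simp [hsum]

@[simp] theorem hsum_append (l m : List WStep) : hsum (l ++ m) = hsum l + hsum m := by
  simp [hsum]

@[simp] theorem hsum_map_neg (l : List WStep) : hsum (l.map WStep.neg) = -hsum l := by
  induction l with
  | nil => rfl
  | cons s l ih => simp only [List.map_cons, hsum_cons, WStep.inc_neg, ih]; ring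

def firstPassage : Set (List WStep) :=
  {p | hsum p = -1 ∧ ∀ a, a <+: p → hsum a < 0 → a = p}

def balanced : Set (List WStep) := {p | hsum p = 0}

theorem forall_hsum_take_nonneg_iff (p : List WStep) :
    (∀ i < p.length, 0 ≤ hsum (p.take i)) ↔ ∀ a, a <+: p → hsum a < 0 → a = p := by
  constructor
  · intro h a ha hneg
    refine ha.eq_of_length_le (not_lt.mp fun hlt => ?_)
    have := h a.length hlt
    rw [← List.prefix_iff_eq_take.mp ha] at this
    omega
  · intro h i hi
    by_contra! hneg
    have := congrArg List.length (h _ (List.take_prefix i p) hneg)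
    simp only [List.length_take] at this
    omega

theorem Dser_eq_lengthGF : Dser = lengthGF firstPassage := by
  ext n
  simp only [Dser, lengthGF, coeff_mk, dnum, ← Nat.card_coe_set_eq]
  refine congrArg Nat.cast (Nat.card_congr (Equiv.subtypeEquivRight fun p => ?_))
  constructor
  · rintro ⟨rfl, h, hpre⟩
    exact ⟨rfl, h, (forall_hsum_take_nonneg_iff p).mp hpre⟩
  · rintro ⟨rfl, h, hpre⟩
    exact ⟨rfl, h, (forall_hsum_take_nonneg_iff p).mpr hpre⟩

theorem Bser_eq_lengthGF : Bser = lengthGF balanced := rfl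

namespace firstPassage

theorem neg_one_le_hsum_of_prefix {p a : List WStep} (hp : p ∈ firstPassage) (ha : a <+: p) :
    -1 ≤ hsum a := by
  by_cases hneg : hsum a < 0
  · rw [hp.2 a ha hneg, hp.1]
  · omega

theorem prefixFree : PrefixFree firstPassage :=
  fun a ha b hb hab => hb.2 a hab (by rw [ha.1]; norm_num)

theorem singleton_down_mem : [WStep.down] ∈ firstPassage := by
  refine ⟨rfl, fun a ha hneg => ?_⟩
  rcases List.prefix_cons_iff.mp ha with rfl | ⟨t, rfl, ht⟩
  · simp at hneg
  · rw [List.prefix_nil.mp ht]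

theorem cons_mem_iff {s : WStep} (hs : s.inc = 0) {p : List WStep} :
    s :: p ∈ firstPassage ↔ p ∈ firstPassage := by
  constructor
  · intro hp
    refine ⟨by simpa [hs] using hp.1, fun c hc hneg => ?_⟩
    simpa using hp.2 (s :: c) (by simpa using hc) (by simpa [hs] using hneg)
  · intro hp
    refine ⟨by simp [hs, hp.1], fun a ha hneg => ?_⟩
    rcases List.prefix_cons_iff.mp ha with rfl | ⟨t, rfl, ht⟩
    · simp at hneg
    · rw [hp.2 t ht (by simpa [hs] using hneg)]

theorem up_cons_append_mem_iff {a b : List WStep} (ha : a ∈ firstPassage) :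
    WStep.up :: (a ++ b) ∈ firstPassage ↔ b ∈ firstPassage := by
  constructor
  · intro hp
    refine ⟨by simpa [WStep.inc, ha.1] using hp.1, fun c hc hneg => ?_⟩
    have hneg' : hsum (WStep.up :: (a ++ c)) < 0 := by
      simp only [hsum_cons, hsum_append, WStep.inc, ha.1]; omega
    simpa using hp.2 (WStep.up :: (a ++ c)) (by simpa using hc) hneg'
  · intro hb
    refine ⟨by simp [ha.1, hb.1, WStep.inc], fun c hc hneg => ?_⟩
    rcases List.prefix_cons_iff.mp hc with rfl | ⟨t, rfl, ht⟩
    · simp at hneg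
    simp only [hsum_cons, WStep.inc] at hneg
    rcases List.prefix_or_prefix_of_prefix ht (List.prefix_append a b) with hta | ⟨u, rfl⟩
    · have := neg_one_le_hsum_of_prefix ha hta
      omega
    · simp only [hsum_append, ha.1] at hneg
      rw [hb.2 u ((List.prefix_append_right_inj a).mp ht) (by omega)]

theorem eq_nil_of_down_cons_mem {q : List WStep} (hq : WStep.down :: q ∈ firstPassage) :
    q = [] := by
  simpa using hq.2 [WStep.down] (by simp) (by simp [WStep.inc])

theorem exists_append_of_hsum_neg : ∀ {q : List WStep}, hsum q < 0 →
    ∃ a ∈ firstPassage, ∃ b, q = a ++ b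
  | [], hq => by simp at hq
  | s :: r, hq => by
    rcases s.eq_up_or_eq_down_or_inc_eq_zero with rfl | rfl | hs
    · obtain ⟨a, ha, r', rfl⟩ := exists_append_of_hsum_neg (q := r)
        (by simp only [hsum_cons, WStep.inc] at hq; omega)
      obtain ⟨a', ha', b, rfl⟩ := exists_append_of_hsum_neg (q := r')
        (by simp only [hsum_cons, hsum_append, WStep.inc, ha.1] at hq; omega)
      exact ⟨WStep.up :: (a ++ a'), (up_cons_append_mem_iff ha).mpr ha', b, by simp⟩
    · exact ⟨[WStep.down], singleton_down_mem, r, rfl⟩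
    · obtain ⟨a, ha, b, rfl⟩ :=
        exists_append_of_hsum_neg (q := r) (by simpa [hs] using hq)
      exact ⟨s :: a, (cons_mem_iff hs).mpr ha, b, rfl⟩
termination_by q => q.length
decreasing_by all_goals simp_all

end firstPassage

theorem firstPassage_eq : firstPassage =
    Set.image2 List.cons {WStep.down} {[]} ∪
      Set.image2 List.cons WStep.horizontal firstPassage ∪
      Set.image2 List.cons {WStep.up} (Set.image2 (· ++ ·) firstPassage firstPassage) := by
  ext p
  constructor
  · intro hp
    rcases p with _ | ⟨s, q⟩
    · simp [firstPassage] at hp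
    rcases s.eq_up_or_eq_down_or_inc_eq_zero with rfl | rfl | hs
    · have hq : hsum q < 0 := by have := hp.1; simp only [hsum_cons, WStep.inc] at this; omega
      obtain ⟨a, ha, b, rfl⟩ := firstPassage.exists_append_of_hsum_neg hq
      have hb := (firstPassage.up_cons_append_mem_iff ha).mp hp
      exact Or.inr ⟨_, rfl, _, ⟨a, ha, b, hb, rfl⟩, rfl⟩
    · exact Or.inl (Or.inl ⟨_, rfl, [], rfl, by rw [firstPassage.eq_nil_of_down_cons_mem hp]⟩)
    · exact Or.inl (Or.inr ⟨s, hs, q, (firstPassage.cons_mem_iff hs).mp hp, rfl⟩)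
  · rintro ((⟨_, rfl, _, rfl, rfl⟩ | ⟨s, hs, q, hq, rfl⟩) |
      ⟨_, rfl, _, ⟨a, ha, b, hb, rfl⟩, rfl⟩)
    · exact firstPassage.singleton_down_mem
    · exact (firstPassage.cons_mem_iff hs).mpr hq
    · exact (firstPassage.up_cons_append_mem_iff ha).mpr hb

theorem image2_append_firstPassage_balanced :
    Set.image2 (· ++ ·) firstPassage balanced = {q | hsum q = -1} := by
  ext q
  constructor
  · rintro ⟨a, ha, b, hb, rfl⟩
    simp [ha.1, hb.out]
  · intro hq
    obtain ⟨a, ha, b, rfl⟩ := firstPassage.exists_append_of_hsum_neg (by rw [hq.out]; norm_num)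
    refine ⟨a, ha, b, ?_, rfl⟩
    have := hq.out
    simp only [hsum_append, ha.1] at this
    exact show hsum b = 0 by omega

theorem balanced_eq : balanced =
    {[]} ∪ Set.image2 List.cons WStep.horizontal balanced ∪
      Set.image2 List.cons {WStep.up} {q | hsum q = -1} ∪
      Set.image2 List.cons {WStep.down} (List.map WStep.neg '' {q | hsum q = -1}) := by
  ext p
  constructor
  · intro hp
    replace hp : hsum p = 0 := hp
    rcases p with _ | ⟨s, q⟩
    · exact Or.inl (Or.inl (Or.inl rfl))
    rcases s.eq_up_or_eq_down_or_inc_eq_zero with rfl | rfl | hs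
    · have hq : hsum q = -1 := by simp only [hsum_cons, WStep.inc] at hp; omega
      exact Or.inl (Or.inr ⟨_, rfl, q, hq, rfl⟩)
    · have hq : hsum (q.map WStep.neg) = -1 := by
        simp only [hsum_cons, hsum_map_neg, WStep.inc] at hp ⊢; omega
      refine Or.inr ⟨_, rfl, q, ⟨q.map WStep.neg, hq, ?_⟩, rfl⟩
      rw [List.map_map, WStep.neg_involutive.comp_self, List.map_id]
    · have hq : hsum q = 0 := by simpa [hs] using hp
      exact Or.inl (Or.inl (Or.inr ⟨s, hs, q, hq, rfl⟩))
  · rintro (((rfl | ⟨s, hs, q, hq, rfl⟩) | ⟨_, rfl, q, hq, rfl⟩) |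
      ⟨_, rfl, _, ⟨q, hq, rfl⟩, rfl⟩)
    · rfl
    · exact show hsum (s :: q) = 0 by simp [show s.inc = 0 from hs, show hsum q = 0 from hq]
    · exact show hsum (WStep.up :: q) = 0 by simp [hq.out, WStep.inc]
    · exact show hsum (WStep.down :: q.map WStep.neg) = 0 by simp [hq.out, WStep.inc]

theorem lengthGF_firstPassage :
    lengthGF firstPassage = X * (1 + 4 * lengthGF firstPassage + lengthGF firstPassage ^ 2) := by
  conv_lhs => rw [firstPassage_eq]
  rw [lengthGF_union, lengthGF_union, lengthGF_image2_cons, lengthGF_image2_cons,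
    lengthGF_image2_cons, lengthGF_image2_append firstPassage.prefixFree, lengthGF_singleton_nil,
    WStep.card_horizontal]
  · simp only [Nat.card_unique, one_smul, nsmul_eq_mul]
    push_cast
    ring
  all_goals
    try simp only [Set.disjoint_union_left]
    and_intros
    all_goals exact disjoint_image2_cons (by simp [WStep.horizontal, WStep.inc]) _ _

theorem lengthGF_balanced :
    lengthGF balanced = 1 + X * (4 * lengthGF balanced +
      2 * lengthGF firstPassage * lengthGF balanced) := by
  conv_lhs => rw [balanced_eq]
  rw [lengthGF_union, lengthGF_union, lengthGF_union, lengthGF_image2_cons, lengthGF_image2_cons,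
    lengthGF_image2_cons, lengthGF_image_map WStep.neg_involutive.injective,
    ← image2_append_firstPassage_balanced, lengthGF_image2_append firstPassage.prefixFree,
    lengthGF_singleton_nil, WStep.card_horizontal]
  · simp only [Nat.card_unique, one_smul, nsmul_eq_mul]
    push_cast
    ring
  all_goals
    try simp only [Set.disjoint_union_left]
    and_intros
    all_goals first
      | exact disjoint_nil_image2_cons _ _
      | exact disjoint_image2_cons (by simp [WStep.horizontal, WStep.inc]) _ _

theorem B_in_terms_of_D : (1 - Dser ^ 2) * Bser = 1 + 4 * Dser + Dser ^ 2 := by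
  have hD := lengthGF_firstPassage
  have hB := lengthGF_balanced
  rw [← Dser_eq_lengthGF] at hD hB
  rw [← Bser_eq_lengthGF] at hB
  apply mul_left_cancel₀ (X_ne_zero (R := ℤ))
  linear_combination (1 - Bser) * hD + Dser * hB
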